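/- Let R be a commutative ring, D an R-linear triangulated category, M : D → Mod-R a cohomological contravariant functor, and A a full subcategory of D such that A[1] = A, A is precovering in D, and A^{*n} = D for some n ≥ 1. Suppose that M is A-finitely generated and that, for every object D of D, the kernel of every natural transformation D(-,D) → M is also A-finitely generated. Then M is isomorphic to a direct summand of a representable functor. In particular, if D is karoubian, then M is representable. -/

import Mathlib

/-!
Choose `β₀ : D(-, B₀) → M` onto on `A`. Given `βᵢ : D(-, Bᵢ) → M`, a map `A₀ → Bᵢ` generating the
kernel of `βᵢ` on `A` has a cone `Bᵢ₊₁`, and since `M` is cohomological `βᵢ` extends to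
`βᵢ₊₁ : D(-, Bᵢ₊₁) → M`; the map `Bᵢ → Bᵢ₊₁` kills that kernel. Walking along the triangles that
build `A^{*k}` (this is where `A[1] = A` enters) shows that `βᵢ` is onto on `A^{*k}` for `i ≥ k`
and that `Bᵢ → Bᵢ₊ₖ` kills the kernel of `βᵢ` there. For `A^{*n} = D`, `D(-, Bₙ) → D(-, B₂ₙ)`
therefore factors through the epimorphism `βₙ`, and the factor is a section of `β₂ₙ`. When `D`
is karoubian, the resulting idempotent of `B₂ₙ` splits and its image represents `M`.
-/

open CategoryTheory CategoryTheory.Limits CategoryTheory.Pretriangulated Opposite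

universe w v u

namespace Paper

variable (R : Type w) [CommRing R] {D : Type u} [Category.{v} D] [Preadditive D]
  [CategoryTheory.Linear R D] [HasZeroObject D] [HasShift D ℤ]
  [∀ n : ℤ, (shiftFunctor D n).Additive] [Pretriangulated D]

instance oppositeHomModule (X Y : Dᵒᵖ) : Module R (X ⟶ Y) where
  smul r f := (r • f.unop).op
  one_smul f := Quiver.Hom.unop_inj (one_smul _ _)
  mul_smul r s f := Quiver.Hom.unop_inj (mul_smul _ _ _)
  smul_zero r := Quiver.Hom.unop_inj (smul_zero _)
  smul_add r f g := Quiver.Hom.unop_inj (smul_add _ _ _)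
  add_smul r s f := Quiver.Hom.unop_inj (add_smul _ _ _)
  zero_smul f := Quiver.Hom.unop_inj (zero_smul _ _)

instance oppositeLinear : CategoryTheory.Linear R Dᵒᵖ where
  smul_comp X Y Z r f g := by
    exact Quiver.Hom.unop_inj (CategoryTheory.Linear.comp_smul _ _ _ g.unop r f.unop)
  comp_smul X Y Z f r g := by
    exact Quiver.Hom.unop_inj (CategoryTheory.Linear.smul_comp _ _ _ r g.unop f.unop)

/-- `M : D → Mod-R` (contravariant) is cohomological. -/
def IsCohomological (M : Dᵒᵖ ⥤ ModuleCat.{v} R) : Prop :=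
  ∀ T : Pretriangulated.Triangle D, T ∈ (distTriang D) →
    Function.Exact (M.map T.mor₂.op) (M.map T.mor₁.op)

variable (D)

/-- the closure of a class of objects under direct summands -/
def smdClosure (A : Set D) : Set D :=
  {Y | ∃ X ∈ A, ∃ (s : Y ⟶ X) (r : X ⟶ Y), s ≫ r = 𝟙 Y}

/-- `A * B`: objects `Y` fitting in a triangle `X → Y → Z → X[1]` with `X ∈ A`, `Z ∈ B`. -/
def starSets (A B : Set D) : Set D :=
  {Y | ∃ (X Z : D) (_ : X ∈ A) (_ : Z ∈ B) (f : X ⟶ Y) (g : Y ⟶ Z)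
    (h : Z ⟶ X⟦(1 : ℤ)⟧), Pretriangulated.Triangle.mk f g h ∈ (distTriang D)}

/-- `starPow A n = A^{*n}` (for `n ≥ 1`):  `A^{*1} = smd A` and
`A^{*(n+1)} = smd (A^{*n} * A^{*1})`. -/
def starPow (A : Set D) : ℕ → Set D
  | 0 => ∅
  | 1 => smdClosure D A
  | (n + 2) => smdClosure D (starSets D (starPow A (n + 1)) (smdClosure D A))

variable {D}

/-- `M` is `A`-finitely generated. -/
def IsRelFinitelyGenerated (A : Set D) (M : Dᵒᵖ ⥤ ModuleCat.{v} R) : Prop :=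
  ∃ (A₀ : D) (_ : A₀ ∈ A) (α : (linearYoneda R D).obj A₀ ⟶ M),
    ∀ X ∈ A, Function.Surjective (α.app (op X))

/-- The kernel of the natural transformation `β : D(-,D₀) → M` is `A`-finitely
generated. -/
def KernelIsRelFG (A : Set D) {M : Dᵒᵖ ⥤ ModuleCat.{v} R} {D₀ : D}
    (β : (linearYoneda R D).obj D₀ ⟶ M) : Prop :=
  ∃ (A₀ : D) (_ : A₀ ∈ A) (g : A₀ ⟶ D₀),
    (linearYoneda R D).map g ≫ β = 0 ∧
    ∀ X ∈ A, ∀ x : ((linearYoneda R D).obj D₀).obj (op X), β.app (op X) x = 0 →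
      ∃ t : X ⟶ A₀, ((linearYoneda R D).map g).app (op X) t = x


/-- `M` is isomorphic to a direct summand of a representable functor. -/
def IsSummandOfRepresentable (M : Dᵒᵖ ⥤ ModuleCat.{v} R) : Prop :=
  ∃ (D₀ : D) (s : M ⟶ (linearYoneda R D).obj D₀) (r : (linearYoneda R D).obj D₀ ⟶ M),
    s ≫ r = 𝟙 M

/-- `M` is representable. -/
def IsRepresentableMod (M : Dᵒᵖ ⥤ ModuleCat.{v} R) : Prop :=
  ∃ D₀ : D, Nonempty (M ≅ (linearYoneda R D).obj D₀)

lemma _root_.LinearMap.exists_comp_eq_of_ker_le {S : Type*} [Ring S] {P Q N : Type*}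
    [AddCommGroup P] [Module S P] [AddCommGroup Q] [Module S Q] [AddCommGroup N] [Module S N]
    {f : P →ₗ[S] Q} (hf : Function.Surjective f) (g : P →ₗ[S] N)
    (h : LinearMap.ker f ≤ LinearMap.ker g) : ∃ g' : Q →ₗ[S] N, g' ∘ₗ f = g :=
  ⟨(LinearMap.ker f).liftQ g h ∘ₗ (f.quotKerEquivOfSurjective hf).symm.toLinearMap, by
    ext x
    simp [show (f.quotKerEquivOfSurjective hf).symm (f x) = Submodule.Quotient.mk x from
      (f.quotKerEquivOfSurjective hf).symm_apply_eq.mpr rfl]⟩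

lemma exists_natTrans_comp_eq_of_surjective {S : Type*} [Ring S] {C : Type*} [Category C]
    {F G H : C ⥤ ModuleCat.{v} S} (β : F ⟶ G) (hβ : ∀ X, Function.Surjective (β.app X))
    (φ : F ⟶ H) (hker : ∀ X x, β.app X x = 0 → φ.app X x = 0) :
    ∃ s : G ⟶ H, β ≫ s = φ := by
  choose s hs using fun X => LinearMap.exists_comp_eq_of_ker_le (hβ X) (φ.app X).hom
    (fun x hx => hker X x hx)
  have hs_apply (X) (x : F.obj X) : s X (β.app X x) = φ.app X x :=
    LinearMap.congr_fun (hs X) x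
  refine ⟨{ app := fun X => ModuleCat.ofHom (s X), naturality := ?_ }, ?_⟩
  · intro X Y f
    ext m
    obtain ⟨x, rfl⟩ := hβ X m
    simp only [ModuleCat.hom_comp, ModuleCat.hom_ofHom, LinearMap.coe_comp, Function.comp_apply]
    rw [← NatTrans.naturality_apply, hs_apply, hs_apply, NatTrans.naturality_apply]
  · ext X x
    exact hs_apply X x

lemma exists_iso_obj_of_retract {C E : Type*} [Category C] [Category E] [IsIdempotentComplete C]
    (F : C ⥤ E) [F.Full] [F.Faithful] {X : E} {B : C} (h : Retract X (F.obj B)) :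
    ∃ Y : C, Nonempty (X ≅ F.obj Y) := by
  obtain ⟨e, hFe⟩ := F.map_surjective (h.r ≫ h.i)
  have he_idem : e ≫ e = e := F.map_injective (by simp [hFe])
  obtain ⟨Y, i, p, hip, hpi⟩ := IsIdempotentComplete.idempotents_split B e he_idem
  refine ⟨Y, ⟨{ hom := h.i ≫ F.map p, inv := F.map i ≫ h.r, hom_inv_id := ?_, inv_hom_id := ?_ }⟩⟩
  · simp [← F.map_comp_assoc, hpi, hFe]
  · rw [Category.assoc, ← Category.assoc h.r, ← hFe, ← F.map_comp_assoc, ← F.map_comp, ← hpi]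
    simp [hip]

section SummandsAndShifts

variable {C : Type*} [Category C]

lemma subset_smdClosure (S : Set C) : S ⊆ smdClosure C S :=
  fun X hX => ⟨X, hX, 𝟙 X, 𝟙 X, Category.comp_id _⟩

lemma smdClosure_subset {S T : Set C} (hST : S ⊆ T)
    (hT : ∀ ⦃X Y : C⦄ (s : Y ⟶ X) (r : X ⟶ Y), s ≫ r = 𝟙 Y → X ∈ T → Y ∈ T) :
    smdClosure C S ⊆ T := by
  rintro Y ⟨X, hX, s, r, hsr⟩
  exact hT s r hsr (hST hX)

lemma shift_mem_smdClosure [HasShift C ℤ] {S : Set C} {n : ℤ}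
    (hS : ∀ X ∈ S, X⟦n⟧ ∈ smdClosure C S) : ∀ Y ∈ smdClosure C S, Y⟦n⟧ ∈ smdClosure C S := by
  rintro Y ⟨X, hX, s, r, hsr⟩
  obtain ⟨X', hX', s', r', hsr'⟩ := hS X hX
  refine ⟨X', hX', s⟦n⟧' ≫ s', r' ≫ r⟦n⟧', ?_⟩
  rw [Category.assoc, reassoc_of% hsr', ← Functor.map_comp, hsr, CategoryTheory.Functor.map_id]

lemma shift_neg_one_mem_smdClosure [HasShift C ℤ] {A : Set C}
    (hA : (fun X : C => X⟦(1 : ℤ)⟧) '' A = A) :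
    ∀ Z ∈ smdClosure C A, Z⟦(-1 : ℤ)⟧ ∈ smdClosure C A := by
  refine shift_mem_smdClosure fun Z hZ => ?_
  obtain ⟨X, hX, rfl⟩ := hA.symm ▸ hZ
  exact ⟨X, hX, (shiftShiftNeg X (1 : ℤ)).hom, (shiftShiftNeg X (1 : ℤ)).inv,
    (shiftShiftNeg X (1 : ℤ)).hom_inv_id⟩

end SummandsAndShifts

lemma shift_mem_starSets {S T : Set D} {n : ℤ} (hS : ∀ X ∈ S, X⟦n⟧ ∈ S)
    (hT : ∀ X ∈ T, X⟦n⟧ ∈ T) : ∀ Y ∈ starSets D S T, Y⟦n⟧ ∈ starSets D S T := by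
  rintro Y ⟨X, Z, hX, hZ, f, g, h, hfgh⟩
  exact ⟨_, _, hS X hX, hT Z hZ, _, _, _, Triangle.shift_distinguished _ hfgh n⟩

lemma shift_mem_starPow {A : Set D} {n : ℤ} (hA : ∀ X ∈ A, X⟦n⟧ ∈ A) :
    ∀ k, ∀ Y ∈ starPow D A k, Y⟦n⟧ ∈ starPow D A k
  | 0 => fun _ h => h.elim
  | 1 => shift_mem_smdClosure fun X hX => subset_smdClosure A (hA X hX)
  | k + 2 => shift_mem_smdClosure fun X hX =>
      subset_smdClosure _ (shift_mem_starSets (shift_mem_starPow hA (k + 1))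
        (shift_mem_smdClosure fun X hX => subset_smdClosure A (hA X hX)) X hX)

section LinearYoneda

variable {R} {C : Type*} [Category.{v} C] [Preadditive C] [CategoryTheory.Linear R C]
  {M : Cᵒᵖ ⥤ ModuleCat.{v} R}

lemma natTrans_app_comp {B : C} (β : (linearYoneda R C).obj B ⟶ M) {Y Y' : C} (f : Y' ⟶ Y)
    (u : Y ⟶ B) : β.app (op Y') (f ≫ u) = M.map f.op (β.app (op Y) u) :=
  NatTrans.naturality_apply β f.op u

lemma natTrans_app_add {B : C} (β : (linearYoneda R C).obj B ⟶ M) {Y : C} (u v : Y ⟶ B) :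
    β.app (op Y) (u + v) = β.app (op Y) u + β.app (op Y) v :=
  map_add _ _ _

lemma natTrans_app_sub {B : C} (β : (linearYoneda R C).obj B ⟶ M) {Y : C} (u v : Y ⟶ B) :
    β.app (op Y) (u - v) = β.app (op Y) u - β.app (op Y) v :=
  map_sub _ _ _

lemma natTrans_app_comp_eq {B B' : C} {β : (linearYoneda R C).obj B ⟶ M}
    {β' : (linearYoneda R C).obj B' ⟶ M} {q : B ⟶ B'} (hq : (linearYoneda R C).map q ≫ β' = β)
    {Y : C} (u : Y ⟶ B) : β'.app (op Y) (u ≫ q) = β.app (op Y) u := by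
  rw [← hq]
  rfl

def natTransOfElement [M.Additive] [M.Linear R] {B : C} (m : M.obj (op B)) :
    (linearYoneda R C).obj B ⟶ M where
  app Y := ModuleCat.ofHom
    { toFun := fun u => M.map u.op m
      map_add' := fun u v => by simp [op_add, M.map_add]
      map_smul' := fun r u => by
        rw [show (r • u).op = r • u.op from rfl, M.map_smul]
        rfl }
  naturality Y Y' f := by
    ext u
    exact congr($(M.map_comp u.op f).hom m)

def KillsKernelAt {B B' : C} (β : (linearYoneda R C).obj B ⟶ M) (q : B ⟶ B') (X : C) : Prop :=
  ∀ x : X ⟶ B, β.app (op X) x = 0 → x ≫ q = 0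

lemma surjective_app_of_retract {B : C} (β : (linearYoneda R C).obj B ⟶ M) {X Y : C}
    (s : Y ⟶ X) (r : X ⟶ Y) (hsr : s ≫ r = 𝟙 Y) (hX : Function.Surjective (β.app (op X))) :
    Function.Surjective (β.app (op Y)) := by
  intro m
  obtain ⟨u, hu⟩ : ∃ u : X ⟶ B, β.app (op X) u = M.map r.op m := hX _
  refine ⟨s ≫ u, ?_⟩
  rw [natTrans_app_comp, hu, ← ModuleCat.comp_apply, ← M.map_comp, ← op_comp, hsr, op_id,
    M.map_id, ModuleCat.id_apply]

lemma killsKernelAt_of_retract {B B' : C} {β : (linearYoneda R C).obj B ⟶ M} {q : B ⟶ B'}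
    {X Y : C} (s : Y ⟶ X) (r : X ⟶ Y) (hsr : s ≫ r = 𝟙 Y) (hX : KillsKernelAt β q X) :
    KillsKernelAt β q Y := by
  intro x hx
  have hrx : (r ≫ x) ≫ q = 0 := hX _ (by rw [natTrans_app_comp, hx, map_zero])
  rw [← Category.id_comp x, ← hsr, Category.assoc, Category.assoc, ← Category.assoc r, hrx,
    comp_zero]

/-- `D(-, q)` factors through the epimorphism `β`, and the factor is a section of `β'`. -/
lemma isSummandOfRepresentable_of_killsKernelAt {B B' : C} {β : (linearYoneda R C).obj B ⟶ M}
    {β' : (linearYoneda R C).obj B' ⟶ M} {q : B ⟶ B'} (hq : (linearYoneda R C).map q ≫ β' = β)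
    (hsurj : ∀ X, Function.Surjective (β.app (op X))) (hkill : ∀ X, KillsKernelAt β q X) :
    IsSummandOfRepresentable R M := by
  obtain ⟨s, hs⟩ := exists_natTrans_comp_eq_of_surjective β (fun X => hsurj X.unop)
    ((linearYoneda R C).map q) (fun X => hkill X.unop)
  have (X : Cᵒᵖ) : Epi (β.app X) := (ModuleCat.epi_iff_surjective _).mpr (hsurj X.unop)
  have : Epi β := NatTrans.epi_of_epi_app β
  exact ⟨B', s, β', by rw [← cancel_epi β, reassoc_of% hs, hq, Category.comp_id]⟩

lemma IsSummandOfRepresentable.isRepresentableMod [IsIdempotentComplete C]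
    (h : IsSummandOfRepresentable R M) : IsRepresentableMod R M := by
  obtain ⟨B, s, r, hsr⟩ := h
  exact exists_iso_obj_of_retract (linearYoneda R C) ⟨s, r, hsr⟩

end LinearYoneda

section Triangles

variable {R} {M : Dᵒᵖ ⥤ ModuleCat.{v} R} (hM : IsCohomological R M)
include hM

/-- A lift of `m ∈ M(Y)` is built from a lift of its image in `M(X)`, which extends along `f`
once `q` kills the obstruction on `Z[-1]`, and a correction coming from `M(Z)`. -/
lemma surjective_app_of_triangle [M.Additive] {X Y Z : D} {f : X ⟶ Y} {g : Y ⟶ Z}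
    {h : Z ⟶ X⟦(1 : ℤ)⟧} (hT : Triangle.mk f g h ∈ distTriang D) {B B' : D}
    {β : (linearYoneda R D).obj B ⟶ M} {β' : (linearYoneda R D).obj B' ⟶ M} {q : B ⟶ B'}
    (hq : (linearYoneda R D).map q ≫ β' = β)
    (hX : Function.Surjective (β.app (op X))) (hZ : Function.Surjective (β'.app (op Z)))
    (hkill : KillsKernelAt β q (Z⟦(-1 : ℤ)⟧)) :
    Function.Surjective (β'.app (op Y)) := by
  have hT' := inv_rot_of_distTriang _ hT
  obtain ⟨w, hwf, hw⟩ : ∃ w : Z⟦(-1 : ℤ)⟧ ⟶ X, w ≫ f = 0 ∧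
      ∀ u : X ⟶ B', w ≫ u = 0 → ∃ v : Y ⟶ B', u = f ≫ v :=
    ⟨_, comp_distTriang_mor_zero₁₂ _ hT', Triangle.yoneda_exact₂ _ hT'⟩
  have hexact : Function.Exact (M.map g.op) (M.map f.op) := hM _ hT
  intro m
  obtain ⟨u, hu⟩ : ∃ u : X ⟶ B, β.app (op X) u = M.map f.op m := hX _
  obtain ⟨v, hv⟩ := hw (u ≫ q) (by
    rw [← Category.assoc]
    refine hkill _ ?_
    rw [natTrans_app_comp, hu, ← ModuleCat.comp_apply, ← M.map_comp, ← op_comp, hwf, op_zero,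
      M.map_zero]
    rfl)
  obtain ⟨z, hz⟩ := (hexact (m - β'.app (op Y) v)).mp (by
    rw [map_sub, ← natTrans_app_comp, ← hv, natTrans_app_comp_eq hq, hu, sub_self])
  obtain ⟨t, rfl⟩ : ∃ t : Z ⟶ B', β'.app (op Z) t = z := hZ z
  refine ⟨v + g ≫ t, ?_⟩
  rw [natTrans_app_add, natTrans_app_comp]
  exact add_eq_of_eq_sub' hz

/-- A map `x : Y ⟶ B` in the kernel of `β` becomes `g ≫ t` after `q`; the class of `t` comes
from `M(X[1])`, where `β'` is onto, and the remaining difference is killed by `q'`. -/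
lemma killsKernelAt_of_triangle {X Y Z : D} {f : X ⟶ Y} {g : Y ⟶ Z} {h : Z ⟶ X⟦(1 : ℤ)⟧}
    (hT : Triangle.mk f g h ∈ distTriang D) {B B' B'' : D}
    {β : (linearYoneda R D).obj B ⟶ M} {β' : (linearYoneda R D).obj B' ⟶ M} {q : B ⟶ B'}
    {q' : B' ⟶ B''} (hq : (linearYoneda R D).map q ≫ β' = β) (hX : KillsKernelAt β q X)
    (hX' : Function.Surjective (β'.app (op (X⟦(1 : ℤ)⟧)))) (hZ : KillsKernelAt β' q' Z) :
    KillsKernelAt β (q ≫ q') Y := by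
  have hgh : g ≫ h = 0 := comp_distTriang_mor_zero₂₃ _ hT
  have hyoneda : ∀ u : Y ⟶ B', f ≫ u = 0 → ∃ t : Z ⟶ B', u = g ≫ t :=
    Triangle.yoneda_exact₂ _ hT
  have hexact : Function.Exact (M.map h.op) (M.map g.op) := hM _ (rot_of_distTriang _ hT)
  intro x hx
  obtain ⟨t, ht⟩ := hyoneda (x ≫ q) (by
    rw [← Category.assoc]
    exact hX _ (by rw [natTrans_app_comp, hx, map_zero]))
  obtain ⟨m, hm⟩ := (hexact (β'.app (op Z) t)).mp (by
    rw [← natTrans_app_comp, ← ht, natTrans_app_comp_eq hq, hx])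
  obtain ⟨u, rfl⟩ : ∃ u : X⟦(1 : ℤ)⟧ ⟶ B', β'.app (op (X⟦(1 : ℤ)⟧)) u = m := hX' m
  have htu : (t - h ≫ u) ≫ q' = 0 := hZ _ (by
    rw [natTrans_app_sub, natTrans_app_comp, hm, sub_self])
  rw [← Category.assoc, ht, Category.assoc, ← sub_add_cancel t (h ≫ u), Preadditive.add_comp,
    htu, zero_add, ← Category.assoc, ← Category.assoc, hgh, zero_comp, zero_comp]

lemma exists_killsKernelAt [M.Additive] [M.Linear R] {A : Set D} {B : D}
    (β : (linearYoneda R D).obj B ⟶ M) (hβ : KernelIsRelFG R A β) :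
    ∃ (B' : D) (q : B ⟶ B') (β' : (linearYoneda R D).obj B' ⟶ M),
      (linearYoneda R D).map q ≫ β' = β ∧ ∀ X ∈ A, KillsKernelAt β q X := by
  obtain ⟨A₀, -, g, hg, hfac⟩ := hβ
  obtain ⟨B', q, h, hT⟩ := distinguished_cocone_triangle g
  have hgq : g ≫ q = 0 := comp_distTriang_mor_zero₁₂ _ hT
  have hexact : Function.Exact (M.map q.op) (M.map g.op) := hM _ hT
  obtain ⟨m, hm⟩ := (hexact (β.app (op B) (𝟙 B))).mp (by
    have hg₀ : β.app (op A₀) (𝟙 A₀ ≫ g) = 0 := congr(($hg).app (op A₀) (𝟙 A₀))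
    rwa [← natTrans_app_comp, Category.comp_id, ← Category.id_comp g])
  refine ⟨B', q, natTransOfElement m, ?_, fun X hX x hx => ?_⟩
  · ext ⟨Y⟩ (u : Y ⟶ B)
    change M.map (u ≫ q).op m = β.app (op Y) u
    rw [op_comp, M.map_comp, ModuleCat.comp_apply, hm, ← natTrans_app_comp, Category.comp_id]
  · obtain ⟨t, rfl⟩ := hfac X hX x hx
    change (t ≫ g) ≫ q = 0
    rw [Category.assoc, hgq, comp_zero]

end Triangles

structure Tower {C : Type*} [Category.{v} C] [Preadditive C] [CategoryTheory.Linear R C]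
    (A : Set C) (M : Cᵒᵖ ⥤ ModuleCat.{v} R) where
  obj : ℕ → C
  β : ∀ i, (linearYoneda R C).obj (obj i) ⟶ M
  map : ∀ i, obj i ⟶ obj (i + 1)
  map_comp_β : ∀ i, (linearYoneda R C).map (map i) ≫ β (i + 1) = β i
  surjective_zero : ∀ X ∈ A, Function.Surjective ((β 0).app (op X))
  killsKernelAt : ∀ i, ∀ X ∈ A, KillsKernelAt (β i) (map i) X

namespace Tower

section

variable {R} {C : Type*} [Category.{v} C] [Preadditive C] [CategoryTheory.Linear R C]
  {A : Set C} {M : Cᵒᵖ ⥤ ModuleCat.{v} R} (T : Tower R A M)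

def transition (i : ℕ) : ∀ k, T.obj i ⟶ T.obj (i + k)
  | 0 => 𝟙 _
  | k + 1 => transition i k ≫ T.map (i + k)

lemma transition_comp_β (i : ℕ) :
    ∀ k, (linearYoneda R C).map (T.transition i k) ≫ T.β (i + k) = T.β i
  | 0 => by simp [transition]
  | k + 1 => by
    change _ ≫ T.β (i + k + 1) = _
    rw [transition, Functor.map_comp, Category.assoc, T.map_comp_β, transition_comp_β i k]

lemma surjective_of_mem (i : ℕ) : ∀ X ∈ A, Function.Surjective ((T.β i).app (op X)) := by
  induction i with
  | zero => exact T.surjective_zero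
  | succ i ih =>
    intro X hX m
    obtain ⟨u, rfl⟩ := ih X hX m
    exact ⟨u ≫ T.map i, natTrans_app_comp_eq (T.map_comp_β i) u⟩

lemma surjective_of_mem_smdClosure (i : ℕ) :
    ∀ X ∈ smdClosure C A, Function.Surjective ((T.β i).app (op X)) :=
  smdClosure_subset (T.surjective_of_mem i) fun _ _ s r hsr =>
    surjective_app_of_retract (T.β i) s r hsr

lemma killsKernelAt_of_mem_smdClosure (i : ℕ) :
    ∀ X ∈ smdClosure C A, KillsKernelAt (T.β i) (T.map i) X :=
  smdClosure_subset (T.killsKernelAt i) fun _ _ s r hsr => killsKernelAt_of_retract s r hsr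

end

section

variable {R} {A : Set D} {M : Dᵒᵖ ⥤ ModuleCat.{v} R} [M.Additive] (hM : IsCohomological R M)
  (hA : (fun X : D => X⟦(1 : ℤ)⟧) '' A = A) (T : Tower R A M)
include hM hA

lemma surjective_of_mem_starPow :
    ∀ k i, k ≤ i → ∀ X ∈ starPow D A k, Function.Surjective ((T.β i).app (op X))
  | 0, _, _ => fun _ h => h.elim
  | 1, i, _ => T.surjective_of_mem_smdClosure i
  | k + 2, i, hi => by
    obtain ⟨j, rfl⟩ : ∃ j, i = j + 1 := ⟨i - 1, by omega⟩
    refine smdClosure_subset ?_ fun _ _ s r hsr => surjective_app_of_retract _ s r hsr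
    rintro Y ⟨X, Z, hX, hZ, f, g, h, hT⟩
    exact surjective_app_of_triangle hM hT (T.map_comp_β j)
      (surjective_of_mem_starPow (k + 1) j (by omega) X hX)
      (T.surjective_of_mem_smdClosure (j + 1) Z hZ)
      (T.killsKernelAt_of_mem_smdClosure j _ (shift_neg_one_mem_smdClosure hA Z hZ))

lemma killsKernelAt_of_mem_starPow :
    ∀ k i, ∀ X ∈ starPow D A k, KillsKernelAt (T.β i) (T.transition i k) X
  | 0, _ => fun _ h => h.elim
  | 1, i => fun X hX => by
    simpa [transition] using T.killsKernelAt_of_mem_smdClosure i X hX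
  | k + 2, i => by
    refine smdClosure_subset ?_ fun _ _ s r hsr => killsKernelAt_of_retract s r hsr
    rintro Y ⟨X, Z, hX, hZ, f, g, h, hT⟩
    have hX' : X⟦(1 : ℤ)⟧ ∈ starPow D A (k + 1) :=
      shift_mem_starPow (fun W hW => hA ▸ Set.mem_image_of_mem _ hW) (k + 1) X hX
    exact killsKernelAt_of_triangle hM hT (T.transition_comp_β i (k + 1))
      (killsKernelAt_of_mem_starPow (k + 1) i X hX)
      (T.surjective_of_mem_starPow hM hA (k + 1) (i + (k + 1)) (by omega) _ hX')
      (T.killsKernelAt_of_mem_smdClosure (i + (k + 1)) Z hZ)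

end

variable {R} in
lemma nonempty {A : Set D} {M : Dᵒᵖ ⥤ ModuleCat.{v} R} [M.Additive] [M.Linear R]
    (hM : IsCohomological R M) (hfg : IsRelFinitelyGenerated R A M)
    (hker : ∀ (B : D) (β : (linearYoneda R D).obj B ⟶ M), KernelIsRelFG R A β) :
    Nonempty (Tower R A M) := by
  obtain ⟨A₀, -, α, hα⟩ := hfg
  choose next q β' hq hkill using fun s : Σ B : D, (linearYoneda R D).obj B ⟶ M =>
    exists_killsKernelAt hM s.2 (hker s.1 s.2)
  let stage (n : ℕ) : Σ B : D, (linearYoneda R D).obj B ⟶ M :=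
    Nat.rec ⟨A₀, α⟩ (fun _ s => ⟨next s, β' s⟩) n
  exact ⟨{ obj := fun i => (stage i).1
           β := fun i => (stage i).2
           map := fun i => q (stage i)
           map_comp_β := fun i => hq (stage i)
           surjective_zero := hα
           killsKernelAt := fun i => hkill (stage i) }⟩

end Tower

theorem main_representability
    (M : Dᵒᵖ ⥤ ModuleCat.{v} R) [M.Additive] [M.Linear R]
    (hM : IsCohomological R M)
    (A : Set D) (hA1 : (fun X : D => X⟦(1 : ℤ)⟧) '' A = A)
    -- `A^{*n} = D` for some `n ≥ 1`
    (hgen : ∃ n : ℕ, 1 ≤ n ∧ starPow D A n = Set.univ)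
    (hfg : IsRelFinitelyGenerated R A M)
    (hker : ∀ (D₀ : D) (β : (linearYoneda R D).obj D₀ ⟶ M), KernelIsRelFG R A β) :
    IsSummandOfRepresentable R M ∧
    (IsIdempotentComplete D → IsRepresentableMod R M) := by
  obtain ⟨T⟩ := Tower.nonempty hM hfg hker
  obtain ⟨n, -, hn⟩ := hgen
  have hsummand : IsSummandOfRepresentable R M :=
    isSummandOfRepresentable_of_killsKernelAt (T.transition_comp_β n n)
      (fun X => T.surjective_of_mem_starPow hM hA1 n n le_rfl X (hn ▸ trivial))
      (fun X => T.killsKernelAt_of_mem_starPow hM hA1 n n X (hn ▸ trivial))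
  exact ⟨hsummand, fun _ => hsummand.isRepresentableMod⟩

end Paper
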